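/- Let C be a tree with parallel hole positions w₁,…,w_r, (t_i) pairwise distinct trees, and C_{kh} the filling of w₁ by t_k and the other holes by t_h. Suppose u, v are parallel positions such that w₁ ≤ u, v is parallel to w₁, and C_{kh}|_u = C_{kh}|_v holds whenever k < h. Then C_{kh}|_u = C_{kh}|_v holds for all k, h ≥ 1. -/

import Mathlib

/-!
Filling `w₁` by `t k` and the other holes by `t h`, the subtree at `u` depends only on `k`
(`u` lies below `w₁`, and every other hole is parallel to `w₁`, hence to `u`), while the subtree
at `v` depends only on `h` (`v` is parallel to `w₁`). With `m = k + h + 1` the chain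
`C_{kh}|u = C_{km}|u = C_{km}|v = C_{0m}|v = C_{0m}|u = C_{0h}|u = C_{0h}|v = C_{kh}|v`
only invokes the hypothesis at the pairs `k < m`, `0 < m` and `0 < h`.
-/

inductive RTree (α : Type) : Type where
  | node : α → List (RTree α) → RTree α

namespace RTree

variable {α : Type}

def size : RTree α → ℕ
  | node _ ts => 1 + (ts.attach.map (fun t => size t.1)).sum
decreasing_by
  simp only [RTree.node.sizeOf_spec]
  have := List.sizeOf_lt_of_mem t.2
  omega


def height : RTree α → ℕ
  | node _ ts => (ts.attach.map (fun t => height t.1 + 1)).foldr max 0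
decreasing_by
  simp only [RTree.node.sizeOf_spec]
  have := List.sizeOf_lt_of_mem t.2
  omega


inductive IsPos : RTree α → List ℕ → Prop
  | nil (t : RTree α) : IsPos t []
  | cons {a : α} {ts : List (RTree α)} {i : ℕ} {p : List ℕ} (h : i < ts.length) :
      IsPos ts[i] p → IsPos (node a ts) (i :: p)

inductive SubtreeAt : RTree α → List ℕ → RTree α → Prop
  | nil (t : RTree α) : SubtreeAt t [] t
  | cons {a : α} {ts : List (RTree α)} {i : ℕ} {p : List ℕ} {u : RTree α} (h : i < ts.length) :
      SubtreeAt ts[i] p u → SubtreeAt (node a ts) (i :: p) u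

inductive WellRanked (rk : α → ℕ) : RTree α → Prop
  | node {a : α} {ts : List (RTree α)} : ts.length = rk a →
      (∀ t ∈ ts, WellRanked rk t) → WellRanked rk (node a ts)

end RTree

instance {α : Type} [Inhabited α] : Inhabited (RTree α) := ⟨.node default []⟩

def substVars {δ : Type} (f : ℕ → RTree δ) : RTree (Sum δ ℕ) → RTree δ
  | .node (.inl d) ts => .node d (ts.attach.map (fun t => substVars f t.1))
  | .node (.inr i) _ => f i
decreasing_by
  simp only [RTree.node.sizeOf_spec]
  have := List.sizeOf_lt_of_mem t.2
  omega


def applyHom {σ δ : Type} [Inhabited δ] (h' : σ → RTree (Sum δ ℕ)) : RTree σ → RTree δ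
  | .node a ts =>
      substVars (fun i => (ts.attach.map (fun t => applyHom h' t.1)).getD i default) (h' a)
decreasing_by
  simp only [RTree.node.sizeOf_spec]
  have := List.sizeOf_lt_of_mem t.2
  omega


def HasVar {δ : Type} (u : RTree (Sum δ ℕ)) (i : ℕ) : Prop :=
  ∃ p l, RTree.SubtreeAt u p (.node (.inr i) l)

def Nondeleting {σ δ : Type} (rk : σ → ℕ) (h' : σ → RTree (Sum δ ℕ)) : Prop :=
  ∀ (a : σ) (i : ℕ), i < rk a ↔ HasVar (h' a) i

def Nonerasing {σ δ : Type} (h' : σ → RTree (Sum δ ℕ)) : Prop :=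
  ∀ (a : σ) (i : ℕ) (l : List (RTree (Sum δ ℕ))), h' a ≠ .node (.inr i) l

def TetrisFree {σ δ : Type} [Inhabited δ] (rk : σ → ℕ) (h' : σ → RTree (Sum δ ℕ)) : Prop :=
  Nondeleting rk h' ∧ Nonerasing h' ∧
  ∀ s s' : RTree σ, RTree.WellRanked rk s → RTree.WellRanked rk s' →
    applyHom h' s = applyHom h' s' →
    (∀ p, RTree.IsPos s p ↔ RTree.IsPos s' p) ∧
    (∀ p a l a' l', RTree.SubtreeAt s p (.node a l) → RTree.SubtreeAt s' p (.node a' l') →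
      h' a = h' a')

inductive Fills {δ : Type} : RTree (Sum δ Unit) → (List ℕ → RTree δ) → RTree δ → Prop
  | hole {l : List (RTree (Sum δ Unit))} (f : List ℕ → RTree δ) :
      Fills (.node (.inr ()) l) f (f [])
  | node {d : δ} {ts : List (RTree (Sum δ Unit))} {f : List ℕ → RTree δ} {us : List (RTree δ)}
      (h : ts.length = us.length)
      (hc : ∀ (i : ℕ) (hi : i < ts.length), Fills ts[i] (fun p => f (i :: p)) (us[i]'(h ▸ hi))) :
      Fills (.node (.inl d) ts) f (.node d us)

def Par (p q : List ℕ) : Prop := ¬ p <+: q ∧ ¬ q <+: p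

def HoleAt {δ : Type} (C : RTree (Sum δ Unit)) (p : List ℕ) : Prop :=
  ∃ l, RTree.SubtreeAt C p (RTree.node (Sum.inr ()) l)

theorem Par.symm {p q : List ℕ} (h : Par p q) : Par q p := ⟨h.2, h.1⟩

instance : Std.Symm Par := ⟨fun _ _ => Par.symm⟩

theorem Par.of_prefix_right {p q r : List ℕ} (hpq : Par p q) (hqr : q <+: r) : Par p r := by
  refine ⟨fun hpr => ?_, fun hrp => hpq.2 (hqr.trans hrp)⟩
  rcases List.prefix_or_prefix_of_prefix hpr hqr with h | h
  · exact hpq.1 h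
  · exact hpq.2 h

theorem RTree.SubtreeAt.unique {α : Type} {X : RTree α} {q : List ℕ} {s s' : RTree α}
    (h : RTree.SubtreeAt X q s) (h' : RTree.SubtreeAt X q s') : s = s' := by
  induction h with
  | nil => cases h'; rfl
  | cons _ _ ih => cases h' with
    | cons _ hs' => exact ih hs'

theorem HoleAt.cons {δ : Type} {d : δ} {ts : List (RTree (Sum δ Unit))} {i : ℕ}
    (hi : i < ts.length) {p : List ℕ} (h : HoleAt ts[i] p) :
    HoleAt (RTree.node (Sum.inl d) ts) (i :: p) :=
  let ⟨l, hl⟩ := h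
  ⟨l, RTree.SubtreeAt.cons hi hl⟩

theorem Fills.subtreeAt_of_agree {δ : Type} {C : RTree (Sum δ Unit)} {f f' : List ℕ → RTree δ}
    {X X' : RTree δ} {q : List ℕ} {s : RTree δ} (hX : Fills C f X) (hX' : Fills C f' X')
    (hagree : ∀ p, HoleAt C p → (p <+: q ∨ q <+: p) → f p = f' p)
    (hs : RTree.SubtreeAt X q s) : RTree.SubtreeAt X' q s := by
  induction hX generalizing f' X' q s with
  | hole f =>
    cases hX'
    rw [← hagree [] ⟨_, .nil _⟩ (.inl List.nil_prefix)]
    exact hs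
  | @node d ts f us hlen _ ih =>
    cases hX' with
    | @node _ _ _ us' hlen' hc' =>
      match q, hs with
      | [], .nil _ =>
        have hus : us = us' := by
          refine List.ext_getElem (by omega) fun i hi _ => ?_
          have hits : i < ts.length := by omega
          exact (ih i hits (hc' i hits)
            (fun p hp _ => hagree (i :: p) (hp.cons hits) (.inr List.nil_prefix))
            (.nil _)).unique (.nil _)
        exact hus ▸ .nil _
      | i :: q', .cons hi hs' =>
        have hits : i < ts.length := by omega
        refine .cons (by omega) (ih i hits (hc' i hits) (fun p hp hcomp => ?_) hs')
        refine hagree (i :: p) (hp.cons hits) ?_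
        simpa only [List.cons_prefix_cons, true_and] using hcomp

theorem Fills.unique {δ : Type} {C : RTree (Sum δ Unit)} {f : List ℕ → RTree δ} {X X' : RTree δ}
    (hX : Fills C f X) (hX' : Fills C f X') : X = X' :=
  (hX.subtreeAt_of_agree hX' (fun _ _ _ => rfl) (.nil X)).unique (.nil X')

def RTree.fill {δ : Type} : RTree (Sum δ Unit) → (List ℕ → RTree δ) → RTree δ
  | .node (.inr _) _, f => f []
  | .node (.inl d) ts, f =>
      .node d (List.ofFn fun i : Fin ts.length => fill ts[i.1] fun p => f (i.1 :: p))
decreasing_by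
  simp only [RTree.node.sizeOf_spec]
  have := List.sizeOf_lt_of_mem (ts.getElem_mem i.2)
  omega

theorem fills_fill {δ : Type} (C : RTree (Sum δ Unit)) (f : List ℕ → RTree δ) :
    Fills C f (C.fill f) := by
  induction C, f using RTree.fill.induct with
  | case1 _ _ f => rw [RTree.fill]; exact .hole f
  | case2 d ts f ih =>
    rw [RTree.fill]
    refine .node (by simp) fun i hi => ?_
    simpa using ih ⟨i, hi⟩

theorem exists_common_of_forall_lt {β : Type} {U V : ℕ → ℕ → β → Prop}
    (hU : ∀ k h h' s, U k h s → U k h' s) (hV : ∀ k k' h s, V k h s → V k' h s)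
    (hU_unique : ∀ k h s s', U k h s → U k h s' → s = s')
    (hV_unique : ∀ k h s s', V k h s → V k h s' → s = s')
    (hlt : ∀ k h, k < h → ∃ s, U k h s ∧ V k h s) {k h : ℕ} (hh : 0 < h) :
    ∃ s, U k h s ∧ V k h s := by
  obtain ⟨s, hUkm, hVkm⟩ := hlt k (k + h + 1) (by omega)
  obtain ⟨s₀, hU0m, hV0m⟩ := hlt 0 (k + h + 1) (by omega)
  obtain ⟨s₁, hU0h, hV0h⟩ := hlt 0 h hh
  obtain rfl : s = s₀ := hV_unique _ _ _ _ (hV _ 0 _ _ hVkm) hV0m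
  obtain rfl : s = s₁ := hU_unique _ _ _ _ (hU _ _ h _ hU0m) hU0h
  exact ⟨s, hU _ _ h _ hUkm, hV 0 k _ _ hV0h⟩

theorem stmt14_general {δ : Type} (C : RTree (Sum δ Unit))
    (w : List (List ℕ)) (hw : w ≠ [])
    (hholes : ∀ p, HoleAt C p ↔ p ∈ w) (hpar : w.Pairwise Par)
    (t : ℕ → RTree δ)
    (u v : List ℕ)
    (hu : w.head hw <+: u) (hv : Par v (w.head hw))
    (heq : ∀ k h : ℕ, k < h →
      ∀ X, Fills C (fun p => if p = w.head hw then t k else t h) X →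
        ∃ s, RTree.SubtreeAt X u s ∧ RTree.SubtreeAt X v s) :
    ∀ k h : ℕ, 1 ≤ k → 1 ≤ h →
      ∀ X, Fills C (fun p => if p = w.head hw then t k else t h) X →
        ∃ s, RTree.SubtreeAt X u s ∧ RTree.SubtreeAt X v s := by
  intro k h _ hh X hX
  set w₁ := w.head hw
  have hcomp_u : ∀ p, HoleAt C p → (p <+: u ∨ u <+: p) → p = w₁ := by
    intro p hp hcomp
    by_contra hne
    have hpu := (hpar.forall ((hholes p).1 hp) (List.head_mem hw) hne).of_prefix_right hu
    exact hcomp.elim hpu.1 hpu.2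
  have hcomp_v : ∀ p, (p <+: v ∨ v <+: p) → p ≠ w₁ := by
    rintro p hcomp rfl
    exact hcomp.elim hv.2 hv.1
  let F (a b : ℕ) := C.fill fun p => if p = w₁ then t a else t b
  obtain rfl : F k h = X := (fills_fill C _).unique hX
  refine exists_common_of_forall_lt (U := fun a b s => (F a b).SubtreeAt u s)
    (V := fun a b s => (F a b).SubtreeAt v s) ?_ ?_ (fun _ _ _ _ => RTree.SubtreeAt.unique)
    (fun _ _ _ _ => RTree.SubtreeAt.unique) (fun a b hab => heq a b hab _ (fills_fill C _)) hh
  · intro a b b' s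
    refine (fills_fill C _).subtreeAt_of_agree (fills_fill C _) fun p hp hcomp => ?_
    simp only [hcomp_u p hp hcomp, if_true]
  · intro a a' b s
    refine (fills_fill C _).subtreeAt_of_agree (fills_fill C _) fun p _ hcomp => ?_
    simp only [hcomp_v p hcomp, if_false]

/-- if w₁ ≤ u, v is parallel to w₁, and C_{kh}|_u = C_{kh}|_v whenever
k < h, then C_{kh}|_u = C_{kh}|_v for all k, h ≥ 1. -/
theorem stmt14 {δ : Type} (C : RTree (Sum δ Unit))
    (w : List (List ℕ)) (hw : w ≠ [])
    (hholes : ∀ p, HoleAt C p ↔ p ∈ w) (hpar : w.Pairwise Par)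
    (t : ℕ → RTree δ) (ht : Function.Injective t)
    (u v : List ℕ) (huv : Par u v)
    (hu : w.head hw <+: u) (hv : Par v (w.head hw))
    (heq : ∀ k h : ℕ, k < h →
      ∀ X, Fills C (fun p => if p = w.head hw then t k else t h) X →
        ∃ s, RTree.SubtreeAt X u s ∧ RTree.SubtreeAt X v s) :
    ∀ k h : ℕ, 1 ≤ k → 1 ≤ h →
      ∀ X, Fills C (fun p => if p = w.head hw then t k else t h) X →
        ∃ s, RTree.SubtreeAt X u s ∧ RTree.SubtreeAt X v s :=
  stmt14_general C w hw hholes hpar t u v hu hv heq
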